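/- arXiv:2004.05423 — 3 statements merged into one kernel-verified Lean document; each statement's English description precedes it below -/
import Mathlib

section
/- Let h(t) be a real polynomial of degree at most d satisfying Property (H), let r ≥ 1 be an integer, and let (p̃, q̃) be the symmetric decomposition of U_r^{d+1}h(t) with respect to d. Then p̃ has only nonnegative coefficients. -/
/-!
Both `U_r^{d+1}` and the first part of the symmetric decomposition are linear, so
`p̃_i = ∑_k h_k φ(k)`, where `φ(k)` is the `i`-th coefficient of the first part for
`U_r^{d+1}(t^k)`. With `T(x)` the sum of the coefficients of `(1 + ⋯ + t^{r-1})^d` up to degree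
`x`, telescoping gives `φ(k) = T(ri - k) + T(r(d-i) - k) - T(rd - k)`. As that polynomial is
palindromic with nonnegative coefficients, `φ` is antisymmetric under `k ↦ d + 1 - k` on `[1, d]`,
nonincreasing on `[0, d]` and nonnegative at `⌊(d+1)/2⌋`. Summation by parts turns
`∑_k h_k φ(k)` into a combination of the differences
`e_m = (h_0 + ⋯ + h_m) - (h_d + ⋯ + h_{d-m+1})` with nonnegative weights, and Property (H)
says precisely that every `e_m` is nonnegative.
-/

open Polynomial

/-- The geometric polynomial `1 + t + ⋯ + t^{r-1}`. -/
noncomputable def geomPoly (r : ℕ) : ℝ[X] := ∑ j ∈ Finset.range r, X ^ j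

/-- `sect r i f` is the polynomial `f^{⟨r,i⟩}` whose `n`-th coefficient is the `(r*n+i)`-th
coefficient of `f` (valid definition for `r ≥ 1`). -/
noncomputable def sect (r i : ℕ) (f : ℝ[X]) : ℝ[X] :=
  ∑ n ∈ Finset.range (f.natDegree + 1), C (f.coeff (r * n + i)) * X ^ n

/-- The operator `U_r^D h = (h·(1+t+⋯+t^{r-1})^D)^{⟨r,0⟩}`. -/
noncomputable def Uop (r D : ℕ) (h : ℝ[X]) : ℝ[X] := sect r 0 (h * geomPoly r ^ D)

/-- `(p, q)` is the symmetric decomposition of `h` with respect to `d`. -/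
def IsSymmDecomp (d : ℕ) (h p q : ℝ[X]) : Prop :=
  h = p + X * q ∧
  p.natDegree ≤ d ∧ (∀ i ≤ d, p.coeff i = p.coeff (d - i)) ∧
  q.natDegree ≤ d - 1 ∧ (∀ i ≤ d - 1, q.coeff i = q.coeff (d - 1 - i))

/-- A real polynomial is real-rooted if it is zero or all of its complex roots are real. -/
def RealRooted (f : ℝ[X]) : Prop :=
  f = 0 ∨ ∀ z : ℂ, aeval z f = 0 → z.im = 0

/-- The real roots of `f`, with multiplicity, in weakly decreasing order. -/
noncomputable def descRoots (f : ℝ[X]) : List ℝ := (f.roots.sort (· ≤ ·)).reverse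

/-- `Interlaces f g` means `f ⪯ g`: both are real-rooted and, unless one of them is zero,
the decreasingly ordered root lists `s` of `f` and `t` of `g` satisfy
`⋯ ≤ s_2 ≤ t_2 ≤ s_1 ≤ t_1` (with `deg g = deg f` or `deg f + 1`). -/
def Interlaces (f g : ℝ[X]) : Prop :=
  RealRooted f ∧ RealRooted g ∧
  (f = 0 ∨ g = 0 ∨
    (((descRoots g).length = (descRoots f).length ∨
      (descRoots g).length = (descRoots f).length + 1) ∧
     (∀ i, (hf : i < (descRoots f).length) → (hg : i < (descRoots g).length) →
        (descRoots f).get ⟨i, hf⟩ ≤ (descRoots g).get ⟨i, hg⟩) ∧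
     (∀ i, (hg : i + 1 < (descRoots g).length) → (hf : i < (descRoots f).length) →
        (descRoots g).get ⟨i + 1, hg⟩ ≤ (descRoots f).get ⟨i, hf⟩)))

/-- The coefficient of `h` at an integer index, zero for negative indices. -/
noncomputable def coeffZ (h : ℝ[X]) (j : ℤ) : ℝ := if 0 ≤ j then h.coeff j.toNat else 0

/-- Property (H): `h_0 + ⋯ + h_i ≥ h_d + h_{d-1} + ⋯ + h_{d-i+1}` for all `i`. -/
def PropH (d : ℕ) (h : ℝ[X]) : Prop :=
  ∀ i : ℕ, ∑ j ∈ Finset.range i, coeffZ h ((d : ℤ) - j) ≤ ∑ j ∈ Finset.range (i + 1), h.coeff j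

/-- Property (S): `h_0 + ⋯ + h_i ≤ h_s + h_{s-1} + ⋯ + h_{s-i}` for all `i`. -/
def PropS (s : ℕ) (h : ℝ[X]) : Prop :=
  ∀ i : ℕ, ∑ j ∈ Finset.range (i + 1), h.coeff j ≤ ∑ j ∈ Finset.range (i + 1), coeffZ h ((s : ℤ) - j)

open Finset

section CoeffZ

variable (f : ℝ[X])

lemma coeffZ_natCast (n : ℕ) : coeffZ f n = f.coeff n := by
  simp [coeffZ]

lemma coeffZ_of_neg {x : ℤ} (hx : x < 0) : coeffZ f x = 0 :=
  if_neg (by omega)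

lemma coeffZ_X_pow_mul (k : ℕ) (x : ℤ) : coeffZ (X ^ k * f) x = coeffZ f (x - k) := by
  unfold coeffZ
  rw [coeff_X_pow_mul']
  split_ifs <;> first | rfl | omega | congr 1; omega

lemma coeff_mul_eq_sum_coeffZ {d : ℕ} {h : ℝ[X]} (hdeg : h.natDegree ≤ d) (n : ℕ) :
    (h * f).coeff n = ∑ k ∈ range (d + 1), h.coeff k * coeffZ f (n - k) := by
  conv_lhs => rw [h.as_sum_range' (d + 1) (by omega)]
  simp only [sum_mul, finsetSum_coeff, ← C_mul_X_pow_eq_monomial, mul_assoc, coeff_C_mul]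
  refine sum_congr rfl fun k _ => ?_
  rw [← coeffZ_natCast (X ^ k * f), coeffZ_X_pow_mul]

end CoeffZ

noncomputable def cumCoeff (f : ℝ[X]) (x : ℤ) : ℝ :=
  ∑ k ∈ range (f.natDegree + 1), if (k : ℤ) ≤ x then f.coeff k else 0

section CumCoeff

variable {f : ℝ[X]}

lemma cumCoeff_of_neg {x : ℤ} (hx : x < 0) : cumCoeff f x = 0 :=
  sum_eq_zero fun k _ => if_neg (by omega)

lemma cumCoeff_sub_cumCoeff_sub_one (x : ℤ) : cumCoeff f x - cumCoeff f (x - 1) = coeffZ f x := by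
  have hterm : ∀ k : ℕ, ((if (k : ℤ) ≤ x then f.coeff k else 0) -
      if (k : ℤ) ≤ x - 1 then f.coeff k else 0) = if (k : ℤ) = x then f.coeff k else 0 := by
    intro k
    split_ifs <;> first | omega | ring
  rw [cumCoeff, cumCoeff, ← sum_sub_distrib, sum_congr rfl fun k _ => hterm k]
  rcases lt_or_ge x 0 with hx | hx
  · rw [coeffZ_of_neg f hx]
    exact sum_eq_zero fun k _ => if_neg (by omega)
  · lift x to ℕ using hx
    simp only [Nat.cast_inj, sum_ite_eq', mem_range, coeffZ_natCast]
    split_ifs with hn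
    · rfl
    · exact (coeff_eq_zero_of_natDegree_lt (by omega)).symm

lemma cumCoeff_sub_cumCoeff_sub (x : ℤ) (n : ℕ) :
    cumCoeff f x - cumCoeff f (x - n) = ∑ j ∈ range n, coeffZ f (x - j) := by
  induction n with
  | zero => simp
  | succ n ih =>
    rw [sum_range_succ, ← ih, ← cumCoeff_sub_cumCoeff_sub_one (x - n)]
    push_cast
    ring_nf

lemma cumCoeff_mono (hf : ∀ n, 0 ≤ f.coeff n) : Monotone (cumCoeff f) :=
  fun _ _ hxy => sum_le_sum fun k _ => by
    split_ifs <;> first | exact le_rfl | exact hf k | omega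

lemma cumCoeff_of_natDegree_le {x : ℤ} (hx : f.natDegree ≤ x) : cumCoeff f x = f.eval 1 := by
  rw [eval_eq_sum_range, cumCoeff]
  exact sum_congr rfl fun k hk => by
    rw [if_pos (by have := mem_range.mp hk; omega), one_pow, mul_one]

lemma cumCoeff_add_cumCoeff_reflect (hf : f.reverse = f) (x : ℤ) :
    cumCoeff f x + cumCoeff f (f.natDegree - 1 - x) = f.eval 1 := by
  have hpal : ∀ k ≤ f.natDegree, f.coeff (f.natDegree - k) = f.coeff k := fun k hk => by
    conv_rhs => rw [← hf, coeff_reverse, revAt_le hk]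
  rw [add_comm, cumCoeff, cumCoeff, ← sum_range_reflect, ← sum_add_distrib, eval_eq_sum_range]
  refine sum_congr rfl fun k hk => ?_
  have hk : k ≤ f.natDegree := Nat.lt_succ_iff.mp (mem_range.mp hk)
  rw [show f.natDegree + 1 - 1 - k = f.natDegree - k by omega, hpal k hk, one_pow, mul_one]
  split_ifs <;> first | omega | ring

end CumCoeff

lemma coeffZ_sum {ι : Type*} (s : Finset ι) (g : ι → ℝ[X]) (x : ℤ) :
    coeffZ (∑ i ∈ s, g i) x = ∑ i ∈ s, coeffZ (g i) x := by
  unfold coeffZ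
  split_ifs <;> simp [finsetSum_coeff]

lemma coeffZ_mul_geomPoly (f : ℝ[X]) (r : ℕ) (x : ℤ) :
    coeffZ (f * geomPoly r) x = cumCoeff f x - cumCoeff f (x - r) := by
  rw [cumCoeff_sub_cumCoeff_sub, geomPoly, mul_sum, coeffZ_sum]
  exact sum_congr rfl fun j _ => by rw [mul_comm, coeffZ_X_pow_mul]

section GeomPoly

variable {r : ℕ}

lemma coeff_geomPoly (r n : ℕ) : (geomPoly r).coeff n = if n < r then 1 else 0 := by
  simp [geomPoly, finsetSum_coeff, coeff_X_pow]

lemma natDegree_geomPoly (hr : 1 ≤ r) : (geomPoly r).natDegree = r - 1 := by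
  refine natDegree_eq_of_le_of_coeff_ne_zero ?_ (by simp [coeff_geomPoly]; omega)
  exact natDegree_le_iff_coeff_eq_zero.mpr fun n hn => by
    rw [coeff_geomPoly, if_neg (by omega)]

lemma reverse_geomPoly (hr : 1 ≤ r) : (geomPoly r).reverse = geomPoly r := by
  ext n
  rw [coeff_reverse, natDegree_geomPoly hr]
  rcases le_or_gt n (r - 1) with hn | hn
  · rw [revAt_le hn, coeff_geomPoly, coeff_geomPoly, if_pos (by omega), if_pos (by omega)]
  · rw [revAt_eq_self_of_lt hn]

lemma natDegree_geomPoly_pow (hr : 1 ≤ r) (d : ℕ) :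
    (geomPoly r ^ d).natDegree = (r - 1) * d := by
  have hmonic : (geomPoly r).Monic := by
    rw [Monic, leadingCoeff, natDegree_geomPoly hr, coeff_geomPoly, if_pos (by omega)]
  rw [hmonic.natDegree_pow, natDegree_geomPoly hr, mul_comm]

lemma reverse_geomPoly_pow (hr : 1 ≤ r) (d : ℕ) :
    (geomPoly r ^ d).reverse = geomPoly r ^ d := by
  induction d with
  | zero => rw [pow_zero, ← C_1, reverse_C]
  | succ d ih => rw [pow_succ, reverse_mul_of_domain, ih, reverse_geomPoly hr]

lemma coeff_geomPoly_pow_nonneg (r d n : ℕ) : 0 ≤ (geomPoly r ^ d).coeff n := by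
  induction d generalizing n with
  | zero => rw [pow_zero, coeff_one]; positivity
  | succ d ih =>
    rw [pow_succ, coeff_mul]
    exact sum_nonneg fun _ _ => mul_nonneg (ih _) (by rw [coeff_geomPoly]; positivity)

end GeomPoly

noncomputable def cumCoeffDefect (f : ℝ[X]) (a b k : ℤ) : ℝ :=
  cumCoeff f (a - k) + cumCoeff f (b - k) - cumCoeff f (a + b - k)

section CumCoeffDefect

variable {f : ℝ[X]} {a b : ℤ} {d : ℕ}

lemma cumCoeffDefect_add_cumCoeffDefect_reflect (hf : f.reverse = f)
    (hab : a + b = f.natDegree + d) {k : ℤ} (hk1 : 1 ≤ k) (hk2 : k ≤ d) :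
    cumCoeffDefect f a b k + cumCoeffDefect f a b (d + 1 - k) = 0 := by
  have ha := cumCoeff_add_cumCoeff_reflect hf (a - (d + 1 - k))
  have hb := cumCoeff_add_cumCoeff_reflect hf (b - (d + 1 - k))
  have hab₁ := cumCoeff_of_natDegree_le (f := f) (x := a + b - k) (by omega)
  have hab₂ := cumCoeff_of_natDegree_le (f := f) (x := a + b - (d + 1 - k)) (by omega)
  rw [show (f.natDegree : ℤ) - 1 - (a - (d + 1 - k)) = b - k by omega] at ha
  rw [show (f.natDegree : ℤ) - 1 - (b - (d + 1 - k)) = a - k by omega] at hb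
  unfold cumCoeffDefect
  linarith

lemma cumCoeffDefect_succ_le (hnn : ∀ n, 0 ≤ f.coeff n) (hab : a + b = f.natDegree + d)
    {l : ℤ} (hl : l < d) : cumCoeffDefect f a b (l + 1) ≤ cumCoeffDefect f a b l := by
  have hmono := cumCoeff_mono hnn
  have h₁ := cumCoeff_of_natDegree_le (f := f) (x := a + b - l) (by omega)
  have h₂ := cumCoeff_of_natDegree_le (f := f) (x := a + b - (l + 1)) (by omega)
  have ha := hmono (show a - (l + 1) ≤ a - l by omega)
  have hb := hmono (show b - (l + 1) ≤ b - l by omega)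
  unfold cumCoeffDefect
  linarith

lemma cumCoeffDefect_nonneg (hf : f.reverse = f) (hnn : ∀ n, 0 ≤ f.coeff n)
    (hab : a + b = f.natDegree + d) {t : ℤ} (ht : 2 * t ≤ d + 1) :
    0 ≤ cumCoeffDefect f a b t := by
  have hb := cumCoeff_add_cumCoeff_reflect hf (b - t)
  have hab₁ := cumCoeff_of_natDegree_le (f := f) (x := a + b - t) (by omega)
  rw [show (f.natDegree : ℤ) - 1 - (b - t) = a - d - 1 + t by omega] at hb
  have ha := cumCoeff_mono hnn (show a - d - 1 + t ≤ a - t by omega)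
  unfold cumCoeffDefect
  linarith

end CumCoeffDefect

/-- For `i ≤ d`, this is the `i`-th coefficient of the first part of the symmetric decomposition
with respect to `d` of the polynomial with coefficients `a`. -/
def symmPartCoeff (d : ℕ) (a : ℕ → ℝ) (i : ℕ) : ℝ :=
  ∑ j ∈ range (i + 1), a j - ∑ j ∈ range i, a (d - j)

section SummationByParts

variable {d : ℕ} {a : ℕ → ℝ}

lemma sum_range_by_parts_symmPartCoeff (φ : ℕ → ℝ) (m : ℕ) :
    ∑ j ∈ range (m + 1), a j * φ j - ∑ j ∈ range m, a (d - j) * φ (j + 1) =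
      ∑ l ∈ range m, symmPartCoeff d a l * (φ l - φ (l + 1)) +
        symmPartCoeff d a m * φ m := by
  induction m with
  | zero => simp [symmPartCoeff]
  | succ m ih =>
    have hstep : symmPartCoeff d a (m + 1) = symmPartCoeff d a m + a (m + 1) - a (d - m) := by
      simp only [symmPartCoeff, sum_range_succ _ (m + 1), sum_range_succ _ m]
      ring
    rw [sum_range_succ (fun j => a j * φ j) (m + 1),
      sum_range_succ (fun j => a (d - j) * φ (j + 1)) m,
      sum_range_succ (fun l => symmPartCoeff d a l * (φ l - φ (l + 1))) m, hstep]
    linear_combination ih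

lemma sum_range_mul_eq_of_antisymm {φ : ℕ → ℝ}
    (hanti : ∀ k, 1 ≤ k → k ≤ d → φ k + φ (d + 1 - k) = 0) :
    ∑ k ∈ range (d + 1), a k * φ k =
      ∑ j ∈ range ((d + 1) / 2 + 1), a j * φ j -
        ∑ j ∈ range ((d + 1) / 2), a (d - j) * φ (j + 1) := by
  set t := (d + 1) / 2
  have hupper : ∑ j ∈ range t, a (d - j) * φ (j + 1) =
      -∑ k ∈ Ico (d + 1 - t) (d + 1), a k * φ k := by
    have hreflect := sum_Ico_reflect (fun k => a k * φ k) 0 (show t ≤ d + 1 by omega)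
    rw [Nat.sub_zero, ← range_eq_Ico] at hreflect
    rw [← hreflect, ← sum_neg_distrib]
    refine sum_congr rfl fun j hj => ?_
    have := hanti (d - j) (by simp at hj; omega) (by omega)
    rw [show d + 1 - (d - j) = j + 1 by simp at hj; omega] at this
    linear_combination a (d - j) * this
  rw [hupper, sub_neg_eq_add, ← sum_range_add_sum_Ico _ (show t + 1 ≤ d + 1 by omega)]
  obtain ⟨s, hd | hd⟩ : ∃ s, d = 2 * s ∨ d = 2 * s + 1 := ⟨d / 2, by omega⟩
  · rw [show d + 1 - t = t + 1 by omega]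
  · have hmid : φ t = 0 := by
      have := hanti t (by omega) (by omega)
      rw [show d + 1 - t = t by omega] at this
      linarith
    rw [show d + 1 - t = t by omega, sum_eq_sum_Ico_succ_bot (show t < d + 1 by omega), hmid,
      mul_zero, zero_add]

lemma sum_range_mul_nonneg_of_antisymm {φ : ℤ → ℝ}
    (ha : ∀ m ≤ (d + 1) / 2, 0 ≤ symmPartCoeff d a m)
    (hanti : ∀ k : ℤ, 1 ≤ k → k ≤ d → φ k + φ (d + 1 - k) = 0)
    (hmono : ∀ l : ℤ, l < d → φ (l + 1) ≤ φ l) (hmid : 0 ≤ φ ((d + 1) / 2 : ℕ)) :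
    0 ≤ ∑ k ∈ range (d + 1), a k * φ k := by
  have hanti' (k : ℕ) (hk1 : 1 ≤ k) (hk2 : k ≤ d) :
      φ k + φ ((d + 1 - k : ℕ) : ℤ) = 0 := by
    rw [Nat.cast_sub (by omega)]
    exact_mod_cast hanti k (by omega) (by omega)
  rw [sum_range_mul_eq_of_antisymm (φ := fun k : ℕ => φ k) hanti',
    sum_range_by_parts_symmPartCoeff]
  refine add_nonneg (sum_nonneg fun l hl => ?_) (mul_nonneg (ha _ le_rfl) hmid)
  have hl := mem_range.mp hl
  refine mul_nonneg (ha l hl.le) (sub_nonneg.mpr ?_)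
  exact_mod_cast hmono l (by omega)

end SummationByParts

lemma symmPartCoeff_sum_mul {ι : Type*} (s : Finset ι) (c : ι → ℝ) (b : ι → ℕ → ℝ)
    (d i : ℕ) :
    symmPartCoeff d (fun n => ∑ k ∈ s, c k * b k n) i =
      ∑ k ∈ s, c k * symmPartCoeff d (b k) i := by
  simp only [symmPartCoeff, mul_sub, mul_sum]
  rw [sum_sub_distrib, sum_comm, sum_comm (s := range i)]

lemma IsSymmDecomp.coeff_eq_symmPartCoeff {d : ℕ} {f p q : ℝ[X]} (hpq : IsSymmDecomp d f p q)
    {i : ℕ} (hi : i ≤ d) : p.coeff i = symmPartCoeff d f.coeff i := by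
  obtain ⟨rfl, -, hp, -, hq⟩ := hpq
  have hhigh : ∀ j ∈ range i, (p + X * q).coeff (d - j) = p.coeff j + q.coeff j := by
    intro j hj
    have hj := mem_range.mp hj
    rw [show d - j = d - 1 - j + 1 by omega, coeff_add, coeff_X_mul, ← hq j (by omega),
      show d - 1 - j + 1 = d - j by omega, ← hp j (by omega)]
  have htelescope := sum_range_sub p.coeff i
  rw [sum_sub_distrib] at htelescope
  rw [symmPartCoeff, sum_range_succ', sum_congr rfl hhigh]
  simp only [coeff_add, coeff_X_mul, mul_coeff_zero, coeff_X_zero, zero_mul, add_zero,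
    sum_add_distrib]
  linarith

lemma PropH.symmPartCoeff_nonneg {d : ℕ} {h : ℝ[X]} (hH : PropH d h) {i : ℕ} (hi : i ≤ d) :
    0 ≤ symmPartCoeff d h.coeff i := by
  have hcoeffZ : ∀ j ∈ range i, coeffZ h ((d : ℤ) - j) = h.coeff (d - j) := fun j hj => by
    rw [← Nat.cast_sub (by simp at hj; omega), coeffZ_natCast]
  exact sub_nonneg.mpr (sum_congr rfl hcoeffZ ▸ hH i)

lemma coeff_Uop {r : ℕ} (hr : 1 ≤ r) (D : ℕ) (h : ℝ[X]) (n : ℕ) :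
    (Uop r D h).coeff n = (h * geomPoly r ^ D).coeff (r * n) := by
  rw [Uop, sect, finsetSum_coeff]
  simp only [coeff_C_mul, coeff_X_pow, mul_ite, mul_one, mul_zero, add_zero, sum_ite_eq, mem_range]
  split_ifs with hn
  · rfl
  · exact (coeff_eq_zero_of_natDegree_lt (by nlinarith)).symm

lemma symmPartCoeff_coeffZ_mul_geomPoly (f : ℝ[X]) {r d i : ℕ} (hr : 1 ≤ r) (hi : i ≤ d)
    (k : ℕ) :
    symmPartCoeff d (fun n => coeffZ (f * geomPoly r) (r * n - k)) i =
      cumCoeffDefect f (r * i) (r * (d - i)) k := by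
  set T := cumCoeff f
  have hlow : ∑ j ∈ range (i + 1), coeffZ (f * geomPoly r) (r * j - k) = T (r * i - k) := by
    let F (j : ℕ) : ℝ := T (r * j - r - k)
    calc ∑ j ∈ range (i + 1), coeffZ (f * geomPoly r) (r * j - k)
        = ∑ j ∈ range (i + 1), (F (j + 1) - F j) := sum_congr rfl fun j _ => by
          rw [coeffZ_mul_geomPoly]
          congr 2 <;> push_cast <;> ring
      _ = T (r * i - k) := by
          rw [sum_range_sub, show F 0 = 0 from cumCoeff_of_neg (by push_cast; omega)]
          simp only [F]
          push_cast
          ring_nf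
  have hhigh : ∑ j ∈ range i, coeffZ (f * geomPoly r) (r * (d - j : ℕ) - k) =
      T (r * d - k) - T (r * (d - i) - k) := by
    let F (j : ℕ) : ℝ := T (r * (d - j) - k)
    calc ∑ j ∈ range i, coeffZ (f * geomPoly r) (r * (d - j : ℕ) - k)
        = ∑ j ∈ range i, (F j - F (j + 1)) := sum_congr rfl fun j hj => by
          have hj := mem_range.mp hj
          rw [coeffZ_mul_geomPoly]
          congr 2 <;> push_cast [Nat.cast_sub (show j ≤ d by omega)] <;> ring
      _ = T (r * d - k) - T (r * (d - i) - k) := by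
          rw [sum_range_sub']
          simp only [F, Nat.cast_zero, sub_zero]
  rw [symmPartCoeff, hlow, hhigh, cumCoeffDefect,
    show (r * i + r * (d - i) - k : ℤ) = r * d - k by ring]
  ring

lemma symmPartCoeff_Uop {r d i : ℕ} (hr : 1 ≤ r) {h : ℝ[X]} (hdeg : h.natDegree ≤ d)
    (hi : i ≤ d) :
    symmPartCoeff d (Uop r (d + 1) h).coeff i =
      ∑ k ∈ range (d + 1),
        h.coeff k * cumCoeffDefect (geomPoly r ^ d) (r * i) (r * (d - i)) k := by
  have hcoeff : (Uop r (d + 1) h).coeff = fun n : ℕ =>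
      ∑ k ∈ range (d + 1), h.coeff k * coeffZ (geomPoly r ^ d * geomPoly r) (r * n - k) := by
    ext n
    rw [coeff_Uop hr, pow_succ, coeff_mul_eq_sum_coeffZ _ hdeg]
    push_cast
    rfl
  rw [hcoeff, symmPartCoeff_sum_mul]
  exact sum_congr rfl fun k _ => by rw [symmPartCoeff_coeffZ_mul_geomPoly _ hr hi]

/-- If `h` has degree at most `d` and satisfies Property (H), then the first
part `p̃` of the symmetric decomposition of `U_r^{d+1} h` has only nonnegative coefficients. -/
theorem statement4 (d : ℕ) (h : ℝ[X]) (hdeg : h.natDegree ≤ d) (hH : PropH d h)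
    (r : ℕ) (hr : 1 ≤ r)
    (pt qt : ℝ[X]) (hpq : IsSymmDecomp d (Uop r (d + 1) h) pt qt) :
    ∀ i, 0 ≤ pt.coeff i := by
  intro i
  obtain hi | hi := le_or_gt i d
  · have hab : (r * i : ℤ) + r * (d - i) = (geomPoly r ^ d).natDegree + d := by
      rw [natDegree_geomPoly_pow hr]
      push_cast [Nat.cast_sub hr]
      ring
    have hpal := reverse_geomPoly_pow hr d
    have hnn := coeff_geomPoly_pow_nonneg r d
    rw [hpq.coeff_eq_symmPartCoeff hi, symmPartCoeff_Uop hr hdeg hi]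
    exact sum_range_mul_nonneg_of_antisymm (fun m hm => hH.symmPartCoeff_nonneg (by omega))
      (fun k => cumCoeffDefect_add_cumCoeffDefect_reflect hpal hab)
      (fun l => cumCoeffDefect_succ_le hnn hab) (cumCoeffDefect_nonneg hpal hnn hab (by omega))
  · exact coeff_eq_zero_of_natDegree_lt (hpq.2.1.trans_lt hi) |>.ge
end

section
/- Let h(t) be a real polynomial, let r ≥ 1 and d ≥ 0 be integers, and for 0 ≤ i ≤ r-1 set a_{h,d}^{⟨r,i⟩}(t) := (h(t)·(1+t+⋯+t^{r-1})^d)^{⟨r,i⟩}. Then for all 0 ≤ i ≤ r-1, a_{h,d+1}^{⟨r,i⟩}(t) = a_{h,d}^{⟨r,0⟩}(t) + a_{h,d}^{⟨r,1⟩}(t) + ⋯ + a_{h,d}^{⟨r,i⟩}(t) + t·a_{h,d}^{⟨r,i+1⟩}(t) + ⋯ + t·a_{h,d}^{⟨r,r-1⟩}(t). -/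
open Polynomial

/-!
Multiplying by `1 + t + ⋯ + t^{r-1}` adds up the shifts `f·t^k`, `k < r`. The `i`-th section of
`f·t^k` is the `(i-k)`-th section of `f` when `k ≤ i`; when `i < k < r` the index `rn + i - k`
wraps around to `r(n-1) + (r+i-k)`, so it is `t` times the `(r+i-k)`-th section of `f`.
Reindexing both groups of terms gives the recursion.
-/

theorem coeff_sect {r : ℕ} (hr : 0 < r) (i : ℕ) (f : ℝ[X]) (n : ℕ) :
    (sect r i f).coeff n = f.coeff (r * n + i) := by
  simp only [sect, finsetSum_coeff, coeff_C_mul, coeff_X_pow, mul_ite, mul_one, mul_zero,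
    Finset.sum_ite_eq, Finset.mem_range]
  split_ifs with hn
  · rfl
  · have : n ≤ r * n := Nat.le_mul_of_pos_left n hr
    exact (coeff_eq_zero_of_natDegree_lt (by omega)).symm

theorem sect_sum {r : ℕ} (hr : 0 < r) (i : ℕ) {ι : Type*} (s : Finset ι) (f : ι → ℝ[X]) :
    sect r i (∑ k ∈ s, f k) = ∑ k ∈ s, sect r i (f k) := by
  ext n
  simp only [coeff_sect hr, finsetSum_coeff]

theorem sect_mul_X_pow_of_le {r : ℕ} (hr : 0 < r) {i k : ℕ} (hk : k ≤ i) (f : ℝ[X]) :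
    sect r i (f * X ^ k) = sect r (i - k) f := by
  ext n
  rw [coeff_sect hr, coeff_sect hr, coeff_mul_X_pow', if_pos (by omega)]
  congr 1
  omega

theorem sect_mul_X_pow_of_lt {r : ℕ} (hr : 0 < r) {i k : ℕ} (hik : i < k) (hk : k ≤ r + i)
    (f : ℝ[X]) : sect r i (f * X ^ k) = X * sect r (r + i - k) f := by
  ext n
  rcases n with _ | m
  · rw [coeff_sect hr, coeff_mul_X_pow', mul_coeff_zero, coeff_X_zero, zero_mul,
      if_neg (by omega)]
  · have hrm : r * (m + 1) = r * m + r := by ring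
    rw [coeff_sect hr, coeff_X_mul, coeff_sect hr, coeff_mul_X_pow', if_pos (by omega)]
    congr 1
    omega

theorem sect_mul_geomPoly {r i : ℕ} (hr : 0 < r) (hir : i < r) (f : ℝ[X]) :
    sect r i (f * geomPoly r) =
      (∑ j ∈ Finset.range (i + 1), sect r j f) +
      ∑ j ∈ Finset.Ico (i + 1) r, X * sect r j f := by
  have hlow : ∑ k ∈ Finset.range (i + 1), sect r i (f * X ^ k) =
      ∑ j ∈ Finset.range (i + 1), sect r j f := by
    rw [← Finset.sum_range_reflect (sect r · f)]
    refine Finset.sum_congr rfl fun k hk => ?_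
    rw [sect_mul_X_pow_of_le hr (Finset.mem_range_succ_iff.mp hk), Nat.add_sub_cancel]
  have hhigh : ∑ k ∈ Finset.Ico (i + 1) r, sect r i (f * X ^ k) =
      ∑ j ∈ Finset.Ico (i + 1) r, X * sect r j f := by
    have hreflect :=
      Finset.sum_Ico_reflect (X * sect r · f) (i + 1) (m := r) (n := r + i) (by omega)
    rw [show r + i + 1 - r = i + 1 by omega, show r + i + 1 - (i + 1) = r by omega] at hreflect
    rw [← hreflect]
    refine Finset.sum_congr rfl fun k hk => ?_
    rw [Finset.mem_Ico] at hk
    exact sect_mul_X_pow_of_lt hr hk.1 (by omega) f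
  rw [geomPoly, Finset.mul_sum, sect_sum hr, ← Finset.sum_range_add_sum_Ico _ hir, hlow, hhigh]

/-- (Recursion of Lemma `ans2`.) With
`a_{h,d}^{⟨r,i⟩} = (h·(1+t+⋯+t^{r-1})^d)^{⟨r,i⟩}`, for all `0 ≤ i ≤ r-1`:
`a_{h,d+1}^{⟨r,i⟩} = a_{h,d}^{⟨r,0⟩} + ⋯ + a_{h,d}^{⟨r,i⟩} + t·a_{h,d}^{⟨r,i+1⟩} + ⋯ +
t·a_{h,d}^{⟨r,r-1⟩}`. -/
theorem statement10 (h : ℝ[X]) (r d : ℕ) (hr : 1 ≤ r) (i : ℕ) (hi : i ≤ r - 1) :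
    sect r i (h * geomPoly r ^ (d + 1)) =
      (∑ j ∈ Finset.range (i + 1), sect r j (h * geomPoly r ^ d)) +
      ∑ j ∈ Finset.Ico (i + 1) r, X * sect r j (h * geomPoly r ^ d) := by
  rw [pow_succ, ← mul_assoc]
  exact sect_mul_geomPoly hr (by omega) _
end

section
/- Let h(t) = ∑_{i=0}^s h_it^i be a real polynomial of degree s ≤ d, let ℓ = d+1-s, and let (p,q) be the symmetric decomposition of h with respect to d. Then there are uniquely determined real polynomials p_ℓ(t) = ∑_{i=0}^{d} p_{ℓ,i}t^i and q_ℓ(t) = ∑_{i=0}^{s-1} q_{ℓ,i}t^i with p_{ℓ,i} = p_{ℓ,d-i} for all 0 ≤ i ≤ d and q_{ℓ,i} = q_{ℓ,s-1-i} for all 0 ≤ i ≤ s-1, such that (1+t+⋯+t^{ℓ-1})h(t) = p_ℓ(t) + t^ℓ q_ℓ(t). Moreover, with the convention h_i := 0 for i ∉ {0,1,…,s}, p_{ℓ,i} = h_0 + ⋯ + h_i − h_d − ⋯ − h_{d+1-i} and q_{ℓ,i} = −h_0 − ⋯ − h_i + h_s + ⋯ + h_{s-i}, and p_ℓ(t)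 = p(t). -/
/-!
With `H_k = h_0 + ⋯ + h_k` (zero for `k < 0`), the `k`-th coefficient of `(1 + ⋯ + t^{ℓ-1}) h` is
`H_k - H_{k-ℓ}`, and `H_k = h(1)` for `k ≥ s`. The polynomials with coefficients
`H_i + H_{d-i} - H_d` (`i ≤ d`) and `H_s - H_{s-1-i} - H_i` (`i < s`) are visibly symmetric and
satisfy the identity. For uniqueness, if `R + t^ℓ S = 0` with `R`, `S` symmetric, reflecting about
`d = ℓ + (s - 1)` gives `R + S = 0`, so `S = t^ℓ S` and `S = 0`. Finally, if `h = p + t q` is the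
symmetric decomposition, then `h_{d-j} = p_j + q_j`, so `H_i - (h_d + ⋯ + h_{d+1-i}) = p_i`.
-/

open Polynomial

namespace Polynomial

variable {R : Type*}

theorem coeff_sum_range_monomial [Semiring R] (c : ℕ → R) (n k : ℕ) :
    (∑ i ∈ Finset.range n, monomial i (c i)).coeff k = if k < n then c k else 0 := by
  simp only [finsetSum_coeff, coeff_monomial, Finset.sum_ite_eq', Finset.mem_range]

def IsPalindromic [Semiring R] (n : ℕ) (f : R[X]) : Prop :=
  f.natDegree ≤ n ∧ ∀ i ≤ n, f.coeff i = f.coeff (n - i)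

theorem IsPalindromic.reflect_eq [Semiring R] {n : ℕ} {f : R[X]} (hf : IsPalindromic n f) :
    reflect n f = f := by
  ext i
  rw [coeff_reflect]
  rcases le_or_gt i n with hi | hi
  · rw [revAt_le hi, ← hf.2 i hi]
  · rw [revAt_eq_self_of_lt hi]

theorem IsPalindromic.sub [Ring R] {n : ℕ} {f g : R[X]} (hf : IsPalindromic n f)
    (hg : IsPalindromic n g) : IsPalindromic n (f - g) :=
  ⟨(natDegree_sub_le f g).trans (max_le hf.1 hg.1), fun i hi => by
    simp only [coeff_sub, hf.2 i hi, hg.2 i hi]⟩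

theorem eq_zero_of_X_pow_mul_eq_self [Semiring R] {ℓ : ℕ} (hℓ : 0 < ℓ) {f : R[X]}
    (hf : X ^ ℓ * f = f) : f = 0 := by
  rw [← leadingCoeff_eq_zero, leadingCoeff, ← coeff_X_pow_mul f ℓ, hf]
  exact coeff_eq_zero_of_natDegree_lt (by omega)

theorem eq_zero_of_add_X_pow_mul_eq_zero [Ring R] {ℓ : ℕ} {f g : R[X]} (hf : f.natDegree < ℓ)
    (hfg : f + X ^ ℓ * g = 0) : g = 0 := by
  ext n
  rw [← coeff_X_pow_mul g ℓ n, eq_neg_of_add_eq_zero_right hfg, coeff_neg,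
    coeff_eq_zero_of_natDegree_lt (by omega), neg_zero, coeff_zero]

theorem IsPalindromic.eq_zero_of_add_X_pow_mul_eq_zero [Ring R] {d s ℓ : ℕ} (hℓ : 0 < ℓ)
    (hd : ℓ + s = d + 1) {f g : R[X]} (hf : IsPalindromic d f) (hg : IsPalindromic (s - 1) g)
    (hfg : f + X ^ ℓ * g = 0) : g = 0 := by
  rcases Nat.eq_zero_or_pos s with rfl | hs
  · exact Polynomial.eq_zero_of_add_X_pow_mul_eq_zero (hf.1.trans_lt (by omega)) hfg
  obtain rfl : d = ℓ + (s - 1) := by omega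
  -- reflecting about `d` turns `f = -X^ℓ g` into `f = -g`
  have hf_eq : f = -(X ^ ℓ * g) := eq_neg_of_add_eq_zero_left hfg
  have hf_eq' : f = -g := by
    rw [← hf.reflect_eq, hf_eq, reflect_neg, reflect_mul _ _ (natDegree_X_pow_le ℓ) hg.1,
      reflect_monomial, revAt_le le_rfl, Nat.sub_self, pow_zero, one_mul, hg.reflect_eq]
  refine eq_zero_of_X_pow_mul_eq_self hℓ ?_
  rw [← neg_inj, ← hf_eq, hf_eq']

end Polynomial

open Finset

section PartialSums

variable (h : ℝ[X])

noncomputable def partialSum (k : ℤ) : ℝ := ∑ j ∈ range (k + 1).toNat, h.coeff j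

theorem partialSum_natCast (i : ℕ) : partialSum h i = ∑ j ∈ range (i + 1), h.coeff j := by
  rw [partialSum, ← Nat.cast_succ, Int.toNat_natCast]

variable {h}

theorem partialSum_of_neg {k : ℤ} (hk : k < 0) : partialSum h k = 0 := by
  rw [partialSum, Int.toNat_eq_zero.mpr (by omega), sum_range_zero]

theorem partialSum_of_natDegree_le {k : ℤ} (hk : (h.natDegree : ℤ) ≤ k) :
    partialSum h k = h.eval 1 := by
  rw [partialSum, eval_eq_sum_range' (p := h) (n := (k + 1).toNat) (by omega)]
  simp only [one_pow, mul_one]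

variable (h)

theorem partialSum_sub_partialSum_sub_one (k : ℤ) :
    partialSum h k - partialSum h (k - 1) = coeffZ h k := by
  rcases lt_or_ge k 0 with hk | hk
  · rw [partialSum_of_neg hk, partialSum_of_neg (by omega), coeffZ, if_neg hk.not_ge, sub_zero]
  · rw [partialSum, partialSum, sub_add_cancel, show (k + 1).toNat = k.toNat + 1 by omega,
      sum_range_succ, add_sub_cancel_left, coeffZ, if_pos hk]

theorem sum_range_coeffZ_sub (a : ℤ) (i : ℕ) :
    ∑ j ∈ range i, coeffZ h (a - j) = partialSum h a - partialSum h (a - i) := by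
  induction i with
  | zero => simp
  | succ i ih =>
    rw [sum_range_succ, ih, ← partialSum_sub_partialSum_sub_one, Nat.cast_succ, sub_add_eq_sub_sub]
    ring

theorem coeffZ_natCast_sub (n j : ℕ) :
    coeffZ h (n - j) = if j ≤ n then h.coeff (n - j) else 0 := by
  unfold coeffZ
  split_ifs <;> first | rfl | omega | (congr 1; omega)

theorem coeff_geomPoly_mul (ℓ n : ℕ) :
    (geomPoly ℓ * h).coeff n = partialSum h n - partialSum h (n - ℓ) := by
  simp only [geomPoly, sum_mul, finsetSum_coeff, coeff_X_pow_mul', ← coeffZ_natCast_sub,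
    sum_range_coeffZ_sub]

end PartialSums

section Witnesses

variable (h : ℝ[X])

-- The paper's `p_ℓ` and `q_ℓ`.
noncomputable def stapledonP (d : ℕ) : ℝ[X] :=
  ∑ i ∈ range (d + 1), monomial i (partialSum h i + partialSum h (d - i) - partialSum h d)

noncomputable def stapledonQ (s : ℕ) : ℝ[X] :=
  ∑ i ∈ range s, monomial i (partialSum h s - partialSum h (s - 1 - i) - partialSum h i)

theorem isPalindromic_stapledonP (d : ℕ) : IsPalindromic d (stapledonP h d) := by
  refine ⟨natDegree_le_iff_coeff_eq_zero.mpr fun n hn => ?_, fun i hi => ?_⟩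
  · rw [stapledonP, coeff_sum_range_monomial, if_neg (by omega)]
  · rw [stapledonP, coeff_sum_range_monomial, coeff_sum_range_monomial, if_pos (by omega),
      if_pos (by omega), Nat.cast_sub hi, sub_sub_cancel]
    ring

theorem isPalindromic_stapledonQ (s : ℕ) : IsPalindromic (s - 1) (stapledonQ h s) := by
  refine ⟨natDegree_le_iff_coeff_eq_zero.mpr fun n hn => ?_, fun i hi => ?_⟩
  · rw [stapledonQ, coeff_sum_range_monomial, if_neg (by omega)]
  · rw [stapledonQ, coeff_sum_range_monomial, coeff_sum_range_monomial]
    rcases Nat.eq_zero_or_pos s with rfl | hs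
    · simp
    rw [if_pos (by omega), if_pos (by omega), Nat.cast_sub (by omega), Nat.cast_sub hs]
    ring_nf

end Witnesses

section Coefficients

variable {h : ℝ[X]}

theorem coeff_stapledonP {d i : ℕ} (hi : i ≤ d) :
    (stapledonP h d).coeff i =
      ∑ j ∈ range (i + 1), h.coeff j - ∑ j ∈ range i, coeffZ h ((d : ℤ) - j) := by
  rw [stapledonP, coeff_sum_range_monomial, if_pos (by omega), ← partialSum_natCast,
    sum_range_coeffZ_sub]
  ring

theorem coeff_stapledonQ {s i : ℕ} (hi : i ≤ s - 1) :
    (stapledonQ h s).coeff i =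
      -(∑ j ∈ range (i + 1), h.coeff j) + ∑ j ∈ range (i + 1), coeffZ h ((s : ℤ) - j) := by
  rw [stapledonQ, coeff_sum_range_monomial, ← partialSum_natCast, sum_range_coeffZ_sub]
  rcases Nat.eq_zero_or_pos s with rfl | hs
  · obtain rfl : i = 0 := by omega
    rw [if_neg (by omega),
      partialSum_of_neg (show ((0 : ℕ) : ℤ) - ((0 + 1 : ℕ) : ℤ) < 0 by omega)]
    ring
  · rw [if_pos (by omega), show (s : ℤ) - ((i + 1 : ℕ) : ℤ) = s - 1 - i by push_cast; ring]
    ring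

theorem IsSymmDecomp.coeff_fst {d : ℕ} {p q : ℝ[X]} (hpq : IsSymmDecomp d h p q) {i : ℕ}
    (hi : i ≤ d) :
    p.coeff i = ∑ j ∈ range (i + 1), h.coeff j - ∑ j ∈ range i, coeffZ h ((d : ℤ) - j) := by
  obtain ⟨rfl, -, hp, -, hq⟩ := hpq
  have head : ∑ j ∈ range (i + 1), (p + X * q).coeff j =
      ∑ j ∈ range (i + 1), p.coeff j + ∑ j ∈ range i, q.coeff j := by
    simp only [coeff_add, sum_add_distrib, sum_range_succ' (fun j => (X * q).coeff j),
      coeff_X_mul, coeff_X_mul_zero, add_zero]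
  -- the mirrored coefficient `h_{d-j}` equals `p_j + q_j` by the two symmetries
  have tail : ∑ j ∈ range i, coeffZ (p + X * q) ((d : ℤ) - j) =
      ∑ j ∈ range i, (p.coeff j + q.coeff j) := by
    refine sum_congr rfl fun j hj => ?_
    have hj : j < i := mem_range.1 hj
    rw [coeffZ_natCast_sub, if_pos (by omega), coeff_add, hp j (by omega), hq j (by omega),
      show d - j = d - 1 - j + 1 by omega, coeff_X_mul]
  rw [head, tail, sum_range_succ, sum_add_distrib]
  ring

theorem IsSymmDecomp.fst_eq_stapledonP {d : ℕ} {p q : ℝ[X]} (hpq : IsSymmDecomp d h p q) :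
    p = stapledonP h d := by
  ext i
  rcases le_or_gt i d with hi | hi
  · rw [hpq.coeff_fst hi, coeff_stapledonP hi]
  · rw [coeff_eq_zero_of_natDegree_lt (hpq.2.1.trans_lt hi),
      coeff_eq_zero_of_natDegree_lt ((isPalindromic_stapledonP h d).1.trans_lt hi)]

end Coefficients

section Identity

variable {h : ℝ[X]}

theorem geomPoly_mul_eq_stapledonP_add {d s ℓ : ℕ} (hdeg : h.natDegree = s) (hsd : s ≤ d)
    (hℓ : ℓ = d + 1 - s) : geomPoly ℓ * h = stapledonP h d + X ^ ℓ * stapledonQ h s := by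
  have stable : ∀ k : ℤ, (s : ℤ) ≤ k → partialSum h k = h.eval 1 :=
    fun k hk => partialSum_of_natDegree_le (by omega)
  ext n
  rw [coeff_add, coeff_X_pow_mul', coeff_geomPoly_mul, stapledonP, stapledonQ,
    coeff_sum_range_monomial, coeff_sum_range_monomial]
  rcases lt_or_ge n ℓ with hnℓ | hnℓ
  · rw [if_pos (by omega), if_neg (by omega), partialSum_of_neg (k := n - ℓ) (by omega),
      stable d (by omega), stable (d - n) (by omega)]
    ring
  rw [if_pos hnℓ, Nat.cast_sub hnℓ]
  rcases le_or_gt n d with hnd | hnd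
  · rw [if_pos (by omega), if_pos (by omega), stable d (by omega), stable s le_rfl,
      show (s : ℤ) - 1 - (n - ℓ) = d - n by omega]
    ring
  · rw [if_neg (by omega), if_neg (by omega), stable n (by omega), stable (n - ℓ) (by omega)]
    ring

theorem eq_stapledon_of_geomPoly_mul_eq {d s ℓ : ℕ} (hdeg : h.natDegree = s) (hsd : s ≤ d)
    (hℓ : ℓ = d + 1 - s) {P Q : ℝ[X]} (hP : IsPalindromic d P) (hQ : IsPalindromic (s - 1) Q)
    (hPQ : geomPoly ℓ * h = P + X ^ ℓ * Q) : P = stapledonP h d ∧ Q = stapledonQ h s := by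
  have hexist := geomPoly_mul_eq_stapledonP_add hdeg hsd hℓ
  have hQ_eq : Q = stapledonQ h s := sub_eq_zero.mp <|
    IsPalindromic.eq_zero_of_add_X_pow_mul_eq_zero (ℓ := ℓ) (by omega) (by omega)
      (hP.sub (isPalindromic_stapledonP h d)) (hQ.sub (isPalindromic_stapledonQ h s))
      (by linear_combination hexist - hPQ)
  exact ⟨by linear_combination hexist - hPQ - X ^ ℓ * hQ_eq, hQ_eq⟩

end Identity

theorem statement16_general (d s ℓ : ℕ) (h : ℝ[X]) (hdeg : h.natDegree = s)
    (hsd : s ≤ d) (hℓ : ℓ = d + 1 - s)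
    (p q : ℝ[X]) (hpq : IsSymmDecomp d h p q) :
    (∃! PQ : ℝ[X] × ℝ[X],
      PQ.1.natDegree ≤ d ∧ (∀ i ≤ d, PQ.1.coeff i = PQ.1.coeff (d - i)) ∧
      PQ.2.natDegree ≤ s - 1 ∧ (∀ i ≤ s - 1, PQ.2.coeff i = PQ.2.coeff (s - 1 - i)) ∧
      geomPoly ℓ * h = PQ.1 + X ^ ℓ * PQ.2) ∧
    (∀ P Q : ℝ[X],
      (P.natDegree ≤ d ∧ (∀ i ≤ d, P.coeff i = P.coeff (d - i)) ∧
       Q.natDegree ≤ s - 1 ∧ (∀ i ≤ s - 1, Q.coeff i = Q.coeff (s - 1 - i)) ∧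
       geomPoly ℓ * h = P + X ^ ℓ * Q) →
      (∀ i ≤ d, P.coeff i =
          ∑ j ∈ Finset.range (i + 1), h.coeff j
            - ∑ j ∈ Finset.range i, coeffZ h ((d : ℤ) - j)) ∧
      (∀ i ≤ s - 1, Q.coeff i =
          -(∑ j ∈ Finset.range (i + 1), h.coeff j)
            + ∑ j ∈ Finset.range (i + 1), coeffZ h ((s : ℤ) - j)) ∧
      P = p) := by
  obtain ⟨hP₀deg, hP₀sym⟩ := isPalindromic_stapledonP h d
  obtain ⟨hQ₀deg, hQ₀sym⟩ := isPalindromic_stapledonQ h s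
  refine ⟨⟨(stapledonP h d, stapledonQ h s),
    ⟨hP₀deg, hP₀sym, hQ₀deg, hQ₀sym, geomPoly_mul_eq_stapledonP_add hdeg hsd hℓ⟩, ?_⟩, ?_⟩
  · rintro ⟨P, Q⟩ ⟨hPdeg, hPsym, hQdeg, hQsym, hPQ⟩
    obtain ⟨rfl, rfl⟩ :=
      eq_stapledon_of_geomPoly_mul_eq hdeg hsd hℓ ⟨hPdeg, hPsym⟩ ⟨hQdeg, hQsym⟩ hPQ
    rfl
  · rintro P Q ⟨hPdeg, hPsym, hQdeg, hQsym, hPQ⟩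
    obtain ⟨rfl, rfl⟩ :=
      eq_stapledon_of_geomPoly_mul_eq hdeg hsd hℓ ⟨hPdeg, hPsym⟩ ⟨hQdeg, hQsym⟩ hPQ
    exact ⟨fun i => coeff_stapledonP, fun i => coeff_stapledonQ, hpq.fst_eq_stapledonP.symm⟩

/-- (Lemma `extendedStapledon`.) For `h` of degree `s ≤ d`, `ℓ = d+1-s`,
and symmetric decomposition `(p, q)` of `h`, there are unique symmetric polynomials `p_ℓ`
(w.r.t. `d`) and `q_ℓ` (w.r.t. `s-1`) with `(1+t+⋯+t^{ℓ-1})·h = p_ℓ + t^ℓ·q_ℓ`; moreover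
`p_{ℓ,i} = h_0+⋯+h_i − h_d−⋯−h_{d+1-i}`, `q_{ℓ,i} = −h_0−⋯−h_i + h_s+⋯+h_{s-i}`, and
`p_ℓ = p`. -/
theorem statement16 (d s ℓ : ℕ) (h : ℝ[X]) (hne : h ≠ 0) (hdeg : h.natDegree = s)
    (hsd : s ≤ d) (hℓ : ℓ = d + 1 - s)
    (p q : ℝ[X]) (hpq : IsSymmDecomp d h p q) :
    (∃! PQ : ℝ[X] × ℝ[X],
      PQ.1.natDegree ≤ d ∧ (∀ i ≤ d, PQ.1.coeff i = PQ.1.coeff (d - i)) ∧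
      PQ.2.natDegree ≤ s - 1 ∧ (∀ i ≤ s - 1, PQ.2.coeff i = PQ.2.coeff (s - 1 - i)) ∧
      geomPoly ℓ * h = PQ.1 + X ^ ℓ * PQ.2) ∧
    (∀ P Q : ℝ[X],
      (P.natDegree ≤ d ∧ (∀ i ≤ d, P.coeff i = P.coeff (d - i)) ∧
       Q.natDegree ≤ s - 1 ∧ (∀ i ≤ s - 1, Q.coeff i = Q.coeff (s - 1 - i)) ∧
       geomPoly ℓ * h = P + X ^ ℓ * Q) →
      (∀ i ≤ d, P.coeff i =
          ∑ j ∈ Finset.range (i + 1), h.coeff j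
            - ∑ j ∈ Finset.range i, coeffZ h ((d : ℤ) - j)) ∧
      (∀ i ≤ s - 1, Q.coeff i =
          -(∑ j ∈ Finset.range (i + 1), h.coeff j)
            + ∑ j ∈ Finset.range (i + 1), coeffZ h ((s : ℤ) - j)) ∧
      P = p) :=
  statement16_general d s ℓ h hdeg hsd hℓ p q hpq
end
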